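/- For every τ ∈ ℝ^ℓ, the Hessian matrix ( ∂²K_λ/∂τ_i∂τ_j )(τ) is positive definite if and only if l_j − L_j(τ) > 0 for every j = 1, …, ℓ. -/

import Mathlib

open Real Finset

noncomputable section

/-- `K(t) = log(1 + e^{2t})`. -/
def Kfun (t : ℝ) : ℝ := Real.log (1 + Real.exp (2 * t))

/-- `𝒥(t) = e^{2t}/(1 + e^{2t})`. -/
def Jfun (t : ℝ) : ℝ := Real.exp (2 * t) / (1 + Real.exp (2 * t))

/-- The coordinate change `Φ(σ)_i = σ_i + (1/2)·Σ_{j>i} c_{ji} K(σ_j)`. -/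
def Phi {ℓ : ℕ} (c : Fin ℓ → Fin ℓ → ℤ) (σ : Fin ℓ → ℝ) : Fin ℓ → ℝ :=
  fun i => σ i + (1 / 2) * ∑ j ∈ Finset.univ.filter (fun j => i < j), (c j i : ℝ) * Kfun (σ j)

/-- The inverse of the coordinate change `Φ`. -/
def PhiInv {ℓ : ℕ} (c : Fin ℓ → Fin ℓ → ℤ) : (Fin ℓ → ℝ) → (Fin ℓ → ℝ) :=
  Function.invFun (Phi c)

/-- The Kähler potential `K_λ(τ) = Σ_i l_i K(τ̃_i)`, where `τ̃ = Φ⁻¹(τ)`. -/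
def Klam {ℓ : ℕ} (l : Fin ℓ → ℤ) (c : Fin ℓ → Fin ℓ → ℤ) (τ : Fin ℓ → ℝ) : ℝ :=
  ∑ i, (l i : ℝ) * Kfun (PhiInv c τ i)

/-- The action variables `J_j(τ) = (1/2)·∂K_λ/∂τ_j`. -/
def Jact {ℓ : ℕ} (l : Fin ℓ → ℤ) (c : Fin ℓ → Fin ℓ → ℤ) (j : Fin ℓ) (τ : Fin ℓ → ℝ) : ℝ :=
  (1 / 2) * fderiv ℝ (Klam l c) τ (Pi.single j 1)

/-- `L_j(τ) = Σ_{i<j} c_{ji} J_i(τ)`. -/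
def Lfun {ℓ : ℕ} (l : Fin ℓ → ℤ) (c : Fin ℓ → Fin ℓ → ℤ) (j : Fin ℓ) (τ : Fin ℓ → ℝ) : ℝ :=
  ∑ i ∈ Finset.univ.filter (fun i => i < j), (c j i : ℝ) * Jact l c i τ

/-! Write `σ = Φ⁻¹(τ)`. Since `K_λ ∘ Φ = Σ_j l_j K(σ_j)` and `Φ(σ) = σ + Σ_j K(σ_j) b_j` with
`b_j` supported on the indices below `j`, the second-order chain rule gives, for the Hessian `H`
of `K_λ` at `τ`,
  `H(DΦ v, DΦ w) = Σ_j K''(σ_j) (l_j - DK_λ(τ) b_j) v_j w_j`,  where `DK_λ(τ) b_j = L_j(τ)`.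
So `H` is congruent, through the invertible Jacobian `DΦ(σ)`, to a diagonal matrix whose entries
are `l_j - L_j(τ)` times `K'' = 4𝒥(1 - 𝒥) > 0`. -/

open Matrix

section SecondOrderChainRule

variable {𝕜 E F G : Type*} [NontriviallyNormedField 𝕜] [NormedAddCommGroup E] [NormedSpace 𝕜 E]
  [NormedAddCommGroup F] [NormedSpace 𝕜 F] [NormedAddCommGroup G] [NormedSpace 𝕜 G]

theorem fderiv_fderiv_comp_apply {f : F → G} {φ : E → F} (hf : ContDiff 𝕜 2 f)
    (hφ : ContDiff 𝕜 2 φ) (x v w : E) :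
    fderiv 𝕜 (fderiv 𝕜 (f ∘ φ)) x v w =
      fderiv 𝕜 (fderiv 𝕜 f) (φ x) (fderiv 𝕜 φ x v) (fderiv 𝕜 φ x w) +
        fderiv 𝕜 f (φ x) (fderiv 𝕜 (fderiv 𝕜 φ) x v w) := by
  have hf1 := hf.differentiable two_ne_zero
  have hφ1 := hφ.differentiable two_ne_zero
  have hf2 := (hf.fderiv_right (m := 1) le_rfl).differentiable one_ne_zero
  have hφ2 := (hφ.fderiv_right (m := 1) le_rfl).differentiable one_ne_zero
  have hD : fderiv 𝕜 (f ∘ φ) = fun y => (fderiv 𝕜 f (φ y)).comp (fderiv 𝕜 φ y) :=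
    funext fun y => fderiv_comp y (hf1 _) (hφ1 y)
  have hDf : HasFDerivAt (fun y => fderiv 𝕜 f (φ y))
      ((fderiv 𝕜 (fderiv 𝕜 f) (φ x)).comp (fderiv 𝕜 φ x)) x :=
    (hf2 _).hasFDerivAt.comp x (hφ1 x).hasFDerivAt
  rw [hD, (hDf.clm_comp (hφ2 x).hasFDerivAt).fderiv]
  simp [add_comm]

end SecondOrderChainRule

section SeparableMaps

variable {ι E F : Type*} [Fintype ι] [NormedAddCommGroup E] [NormedSpace ℝ E]
  [NormedAddCommGroup F] [NormedSpace ℝ F]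

theorem hasFDerivAt_sum_comp_apply_smul {g g' : ℝ → ℝ} (hg : ∀ t, HasDerivAt g (g' t) t)
    (C : ι → F) (σ : ι → ℝ) :
    HasFDerivAt (fun σ : ι → ℝ => ∑ j, g (σ j) • C j)
      (∑ j, g' (σ j) • (ContinuousLinearMap.proj j : (ι → ℝ) →L[ℝ] ℝ).smulRight (C j)) σ := by
  refine HasFDerivAt.fun_sum fun j _ => ?_
  refine (((hg (σ j)).comp_hasFDerivAt (f := fun σ : ι → ℝ => σ j) σ
    (hasFDerivAt_apply (𝕜 := ℝ) j σ)).smul_const (C j)).congr_fderiv ?_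
  ext v
  simp [smul_smul]

variable {h h' h'' : ℝ → ℝ} (T : (ι → ℝ) →L[ℝ] E) (b : ι → E)

theorem fderiv_linear_add_sum_comp_apply_smul (hh : ∀ t, HasDerivAt h (h' t) t) :
    fderiv ℝ (fun σ => T σ + ∑ j, h (σ j) • b j) = fun σ =>
      T + ∑ j, h' (σ j) • (ContinuousLinearMap.proj j : (ι → ℝ) →L[ℝ] ℝ).smulRight (b j) :=
  funext fun σ => (T.hasFDerivAt.add (hasFDerivAt_sum_comp_apply_smul hh b σ)).fderiv

theorem fderiv_fderiv_linear_add_sum_comp_apply_smul (hh : ∀ t, HasDerivAt h (h' t) t)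
    (hh' : ∀ t, HasDerivAt h' (h'' t) t) (σ v w : ι → ℝ) :
    fderiv ℝ (fderiv ℝ (fun σ => T σ + ∑ j, h (σ j) • b j)) σ v w =
      ∑ j, (h'' (σ j) * v j * w j) • b j := by
  have hD := (hasFDerivAt_const T σ).fun_add (hasFDerivAt_sum_comp_apply_smul hh'
    (fun j => (ContinuousLinearMap.proj j : (ι → ℝ) →L[ℝ] ℝ).smulRight (b j)) σ)
  rw [fderiv_linear_add_sum_comp_apply_smul T b hh, hD.fderiv]
  simp [smul_smul, mul_comm, mul_left_comm]

end SeparableMaps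

section JacobianInvertible

variable {𝕜 ι : Type*} [NontriviallyNormedField 𝕜] [Fintype ι] [DecidableEq ι]

theorem isUnit_toMatrix'_fderiv_of_rightInverse {f g : (ι → 𝕜) → ι → 𝕜}
    (hfg : Function.RightInverse g f) {y : ι → 𝕜} (hf : DifferentiableAt 𝕜 f (g y))
    (hg : DifferentiableAt 𝕜 g y) :
    IsUnit (LinearMap.toMatrix' (fderiv 𝕜 f (g y) : (ι → 𝕜) →ₗ[𝕜] ι → 𝕜)) := by
  have hcomp : (fderiv 𝕜 f (g y)).comp (fderiv 𝕜 g y) = ContinuousLinearMap.id 𝕜 _ := by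
    rw [← fderiv_comp y hf hg, hfg.comp_eq_id, fderiv_id]
  refine IsUnit.of_mul_eq_one (LinearMap.toMatrix' (fderiv 𝕜 g y : (ι → 𝕜) →ₗ[𝕜] ι → 𝕜)) ?_
  rw [← LinearMap.toMatrix'_comp, ← ContinuousLinearMap.toLinearMap_comp, hcomp]
  exact LinearMap.toMatrix'_id

end JacobianInvertible

theorem of_fderiv_fderiv_single_eq_toMatrix₂' {ι : Type*} [Fintype ι] [DecidableEq ι]
    {f : (ι → ℝ) → ℝ} {τ : ι → ℝ} (hf : DifferentiableAt ℝ (fderiv ℝ f) τ) :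
    (Matrix.of fun i j => fderiv ℝ (fun σ => fderiv ℝ f σ (Pi.single j 1)) τ (Pi.single i 1)) =
      LinearMap.toMatrix₂' ℝ (fderiv ℝ (fderiv ℝ f) τ).toLinearMap₁₂ := by
  ext i j
  simp [fderiv_clm_apply hf (differentiableAt_const _)]

theorem hasDerivAt_Kfun (t : ℝ) : HasDerivAt Kfun (2 * Jfun t) t := by
  have h := (((hasDerivAt_id t).const_mul 2).exp.const_add 1).log (by positivity)
  refine h.congr_deriv ?_
  simp only [id_eq, mul_one, Jfun]
  ring

theorem hasDerivAt_two_mul_Jfun (t : ℝ) :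
    HasDerivAt (fun t => 2 * Jfun t) (4 * Jfun t * (1 - Jfun t)) t := by
  have h2 := ((hasDerivAt_id t).const_mul 2).exp
  have h := (h2.div (h2.const_add 1) (by positivity)).const_mul 2
  refine h.congr_deriv ?_
  simp only [id_eq, mul_one, Jfun]
  field_simp
  ring

theorem Jfun_pos (t : ℝ) : 0 < Jfun t := by
  unfold Jfun
  positivity

theorem Jfun_lt_one (t : ℝ) : Jfun t < 1 := by
  unfold Jfun
  rw [div_lt_one (by positivity)]
  linarith

theorem contDiff_Kfun {n : WithTop ℕ∞} : ContDiff ℝ n Kfun :=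
  (contDiff_const.add (contDiff_const.mul contDiff_id).exp).log fun t => by positivity

section CoordinateChange

variable {ℓ : ℕ} (c : Fin ℓ → Fin ℓ → ℤ)

def phiInvRec (τ : Fin ℓ → ℝ) (i : Fin ℓ) : ℝ :=
  τ i - (1 / 2) * ∑ j ∈ (univ.filter fun j => i < j).attach, (c j i : ℝ) * Kfun (phiInvRec τ j)
termination_by ℓ - i
decreasing_by exact Nat.sub_lt_sub_left i.isLt (mem_filter.mp j.2).2

theorem Phi_phiInvRec (τ : Fin ℓ → ℝ) : Phi c (phiInvRec c τ) = τ := by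
  funext i
  rw [Phi, phiInvRec, sum_attach _ fun j => (c j i : ℝ) * Kfun (phiInvRec c τ j)]
  ring

theorem Phi_injective : Function.Injective (Phi c) := by
  intro σ σ' h
  funext i
  induction i using WellFoundedGT.induction with
  | _ i ih =>
    have hi := congrFun h i
    simp only [Phi] at hi
    rw [sum_congr rfl fun j hj => by rw [ih j (mem_filter.mp hj).2]] at hi
    linarith

theorem Phi_PhiInv (τ : Fin ℓ → ℝ) : Phi c (PhiInv c τ) = τ :=
  Function.invFun_eq ⟨_, Phi_phiInvRec c τ⟩

theorem PhiInv_Phi (σ : Fin ℓ → ℝ) : PhiInv c (Phi c σ) = σ :=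
  Function.leftInverse_invFun (Phi_injective c) σ

theorem PhiInv_apply (τ : Fin ℓ → ℝ) (i : Fin ℓ) :
    PhiInv c τ i = τ i - (1 / 2) * ∑ j ∈ univ.filter (fun j => i < j),
      (c j i : ℝ) * Kfun (PhiInv c τ j) := by
  have h := congrFun (Phi_PhiInv c τ) i
  rw [Phi] at h
  linarith

theorem contDiff_PhiInv {n : WithTop ℕ∞} : ContDiff ℝ n (PhiInv c) := by
  refine contDiff_pi.2 fun i => ?_
  induction i using WellFoundedGT.induction with
  | _ i ih =>
    simp_rw [PhiInv_apply c _ i]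
    exact (contDiff_apply ℝ ℝ i).sub (contDiff_const.mul (ContDiff.sum fun j hj =>
      contDiff_const.mul (contDiff_Kfun.comp (ih j (mem_filter.mp hj).2))))

def phiDir (j : Fin ℓ) : Fin ℓ → ℝ := fun i => if i < j then (c j i : ℝ) / 2 else 0

theorem Phi_eq_add_sum : Phi c = fun σ => σ + ∑ j, Kfun (σ j) • phiDir c j := by
  funext σ i
  simp only [Phi, phiDir, Pi.add_apply, Finset.sum_apply, Pi.smul_apply, smul_eq_mul, sum_filter,
    mul_sum]
  congr 1
  refine sum_congr rfl fun j _ => ?_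
  split_ifs <;> ring

end CoordinateChange

section KahlerPotential

variable {ℓ : ℕ} (l : Fin ℓ → ℤ) (c : Fin ℓ → Fin ℓ → ℤ)

theorem contDiff_Phi {n : WithTop ℕ∞} : ContDiff ℝ n (Phi c) := by
  rw [Phi_eq_add_sum]
  exact contDiff_id.add (ContDiff.sum fun j _ =>
    (contDiff_Kfun.comp (contDiff_apply ℝ ℝ j)).smul contDiff_const)

theorem contDiff_Klam {n : WithTop ℕ∞} : ContDiff ℝ n (Klam l c) :=
  ContDiff.sum fun i _ => contDiff_const.mul (contDiff_Kfun.comp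
    ((contDiff_pi.1 (contDiff_PhiInv c)) i))

theorem Klam_comp_Phi : Klam l c ∘ Phi c = fun σ => ∑ j, Kfun (σ j) • (l j : ℝ) := by
  funext σ
  simp [Klam, PhiInv_Phi, mul_comm]

theorem fderiv_fderiv_Phi_apply (σ v w : Fin ℓ → ℝ) :
    fderiv ℝ (fderiv ℝ (Phi c)) σ v w =
      ∑ j, (4 * Jfun (σ j) * (1 - Jfun (σ j)) * v j * w j) • phiDir c j := by
  simpa [Phi_eq_add_sum] using fderiv_fderiv_linear_add_sum_comp_apply_smul
    (ContinuousLinearMap.id ℝ _) (phiDir c) hasDerivAt_Kfun hasDerivAt_two_mul_Jfun σ v w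

theorem fderiv_fderiv_Klam_comp_Phi_apply (σ v w : Fin ℓ → ℝ) :
    fderiv ℝ (fderiv ℝ (Klam l c ∘ Phi c)) σ v w =
      ∑ j, 4 * Jfun (σ j) * (1 - Jfun (σ j)) * v j * w j * l j := by
  simpa [Klam_comp_Phi] using fderiv_fderiv_linear_add_sum_comp_apply_smul
    0 (fun j => (l j : ℝ)) hasDerivAt_Kfun hasDerivAt_two_mul_Jfun σ v w

theorem fderiv_Klam_phiDir (τ : Fin ℓ → ℝ) (j : Fin ℓ) :
    fderiv ℝ (Klam l c) τ (phiDir c j) = Lfun l c j τ := by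
  rw [← ContinuousLinearMap.coe_coe, LinearMap.pi_apply_eq_sum_univ]
  simp only [Lfun, Jact, phiDir, sum_filter, ContinuousLinearMap.coe_coe, ite_smul, zero_smul]
  refine sum_congr rfl fun i _ => ?_
  have hsingle : (fun k => if i = k then (1 : ℝ) else 0) = Pi.single i 1 := by
    funext k
    simp [Pi.single_apply, eq_comm]
  rw [hsingle, smul_eq_mul]
  split_ifs <;> ring

theorem fderiv_fderiv_Klam_apply_fderiv_Phi (σ v w : Fin ℓ → ℝ) :
    fderiv ℝ (fderiv ℝ (Klam l c)) (Phi c σ) (fderiv ℝ (Phi c) σ v) (fderiv ℝ (Phi c) σ w) =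
      ∑ j, 4 * Jfun (σ j) * (1 - Jfun (σ j)) * ((l j : ℝ) - Lfun l c j (Phi c σ)) * v j * w j := by
  have h := fderiv_fderiv_comp_apply (contDiff_Klam l c) (contDiff_Phi c) σ v w
  rw [fderiv_fderiv_Klam_comp_Phi_apply, fderiv_fderiv_Phi_apply, map_sum] at h
  simp only [map_smul, fderiv_Klam_phiDir, smul_eq_mul] at h
  rw [eq_sub_of_add_eq h.symm, ← sum_sub_distrib]
  exact sum_congr rfl fun j _ => by ring

end KahlerPotential

/-- Pointwise positivity criterion (Theorem 6.1): the Hessian of the Kähler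
potential `K_λ` at `τ` is positive definite iff `l_j − L_j(τ) > 0` for all `j`. -/
theorem hessian_posDef_iff {ℓ : ℕ} (l : Fin ℓ → ℤ) (c : Fin ℓ → Fin ℓ → ℤ)
    (τ : Fin ℓ → ℝ) :
    (Matrix.of fun i j : Fin ℓ =>
        fderiv ℝ (fun σ => fderiv ℝ (Klam l c) σ (Pi.single j 1)) τ
          (Pi.single i 1)).PosDef ↔
      ∀ j : Fin ℓ, 0 < (l j : ℝ) - Lfun l c j τ := by
  set σ := PhiInv c τ
  have hτ : Phi c σ = τ := Phi_PhiInv c τ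
  have hU : IsUnit (LinearMap.toMatrix' (fderiv ℝ (Phi c) σ : (Fin ℓ → ℝ) →ₗ[ℝ] Fin ℓ → ℝ)) :=
    isUnit_toMatrix'_fderiv_of_rightInverse (Phi_PhiInv c) ((contDiff_Phi c).differentiable
      one_ne_zero _) ((contDiff_PhiInv c).differentiable one_ne_zero _)
  have hdiag : LinearMap.toMatrix₂' ℝ ((fderiv ℝ (fderiv ℝ (Klam l c)) τ).toLinearMap₁₂.compl₁₂
        (fderiv ℝ (Phi c) σ : (Fin ℓ → ℝ) →ₗ[ℝ] Fin ℓ → ℝ) (fderiv ℝ (Phi c) σ)) =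
      diagonal fun j => 4 * Jfun (σ j) * (1 - Jfun (σ j)) * ((l j : ℝ) - Lfun l c j τ) := by
    ext n m
    obtain rfl | hnm := eq_or_ne n m
    · simp [← hτ, fderiv_fderiv_Klam_apply_fderiv_Phi, Pi.single_apply]
    · simp [← hτ, fderiv_fderiv_Klam_apply_fderiv_Phi, Pi.single_apply, hnm, hnm.symm]
  rw [of_fderiv_fderiv_single_eq_toMatrix₂' (((contDiff_Klam l c).fderiv_right (m := 1)
      le_rfl).differentiable one_ne_zero _), ← hU.posDef_star_left_conjugate_iff,
    star_eq_conjTranspose, conjTranspose_eq_transpose_of_trivial, ← LinearMap.toMatrix₂'_compl₁₂,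
    hdiag, posDef_diagonal_iff]
  exact forall_congr' fun j => mul_pos_iff_of_pos_left
    (mul_pos (mul_pos four_pos (Jfun_pos _)) (sub_pos.2 (Jfun_lt_one _)))
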